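/- arXiv:0906.1380 — 7 statements merged into one kernel-verified Lean document; each statement's English description precedes it below -/
import Mathlib

section
/- Let f = X^n + a_{n-1}X^{n-1} + ... + a_1 X + (-1)^n ∈ F_{q^2}[X] be a separable polynomial such that for every root α of f (in an algebraic closure), α^{-q} is also a root. Then a_i = (-1)^n · a_{n-i}^q for all i ≤ n. -/
/-!
The map `σ : x ↦ x ^ q` is a ring endomorphism (a power of Frobenius), and the roots of the
reversed polynomial `(f.map σ).reverse` are the `(σ β)⁻¹` for the roots `β` of `f`. Since
`β ↦ (σ β)⁻¹` is injective, it permutes the finitely many roots of `f`; as these are simple,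
`f` divides `(f.map σ).reverse`, which has degree at most `n` and leading coefficient
`σ (f.coeff 0) = (-1) ^ n`. Hence `(f.map σ).reverse = (-1) ^ n • f`; comparing coefficients
gives the claim.
-/

open Polynomial

namespace Polynomial

variable {L : Type*} [Field L]

theorem C_mul_eq_reverse_map_of_forall_inv_mem_roots (σ : L →+* L) {F : L[X]} (hmonic : F.Monic)
    (hsplits : F.Splits) (hnodup : F.roots.Nodup) (hcoeff : F.coeff 0 ≠ 0)
    (hroots : ∀ β ∈ F.roots, (σ β)⁻¹ ∈ F.roots) :
    C (σ (F.coeff 0)) * F = (F.map σ).reverse := by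
  set R := (F.map σ).reverse
  have hR0 : R ≠ 0 := reverse_eq_zero.not.mpr (Polynomial.map_ne_zero hmonic.ne_zero)
  have hR : ∀ β ∈ F.roots, R.IsRoot (σ β)⁻¹ := by
    intro β hβ
    have hβ0 : β ≠ 0 := by
      rintro rfl
      exact hcoeff (by simpa [coeff_zero_eq_eval_zero] using (mem_roots'.mp hβ).2)
    have := invertibleOfNonzero ((_root_.map_ne_zero σ).mpr hβ0)
    have hroot : eval₂ (RingHom.id L) (σ β) (F.map σ) = 0 := by
      rw [eval₂_id, eval_map, eval₂_at_apply, (mem_roots'.mp hβ).2, map_zero]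
    simpa [IsRoot, eval₂_id] using (eval₂_reverse_eq_zero_iff _ _ _).mpr hroot
  have hbij : Set.BijOn (fun β ↦ (σ β)⁻¹) {β | β ∈ F.roots} {β | β ∈ F.roots} :=
    (F.roots.finite_toSet.injOn_iff_bijOn_of_mapsTo hroots).mp
      fun _ _ _ _ h ↦ σ.injective (inv_injective h)
  have hdvd : F ∣ R := by
    refine hsplits.dvd_of_roots_le_roots hmonic.ne_zero ((Multiset.le_iff_subset hnodup).mpr ?_)
    intro α hα
    obtain ⟨β, hβ, rfl⟩ := hbij.surjOn hα
    exact (mem_roots hR0).mpr (hR β hβ)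
  have hdeg : R.natDegree ≤ F.natDegree :=
    (reverse_natDegree_le _).trans (natDegree_map_le ..)
  rw [eq_leadingCoeff_mul_of_monic_of_dvd_of_natDegree_le hmonic hdvd hdeg, reverse_leadingCoeff,
    trailingCoeff_eq_coeff_zero (by rwa [coeff_map, _root_.map_ne_zero]), coeff_map]

end Polynomial

theorem stmt_2_general (p e q : ℕ) (hp : p.Prime) (hq : q = p ^ e)
    {K : Type*} [Field K] [Fintype K] (hK : Fintype.card K = q ^ 2)
    (f : Polynomial K) (n : ℕ)
    (hmonic : f.Monic) (hdeg : f.natDegree = n)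
    (hsep : f.Separable)
    (hconst : f.coeff 0 = (-1 : K) ^ n)
    (hroots : ∀ α ∈ (f.map (algebraMap K (AlgebraicClosure K))).roots,
      (α⁻¹) ^ q ∈ (f.map (algebraMap K (AlgebraicClosure K))).roots) :
    ∀ i ≤ n, f.coeff i = (-1 : K) ^ n * (f.coeff (n - i)) ^ q := by
  have : Fact p.Prime := ⟨hp⟩
  have : CharP K p := charP_of_card_eq_prime_pow (hK.trans (by rw [hq, ← pow_mul]))
  set ι := algebraMap K (AlgebraicClosure K)
  have : CharP (AlgebraicClosure K) p := charP_of_injective_algebraMap ι.injective p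
  set σ := iterateFrobenius (AlgebraicClosure K) p e
  have hσ : ∀ x, σ x = x ^ q := fun x ↦ by rw [iterateFrobenius_def, hq]
  have hreverse := C_mul_eq_reverse_map_of_forall_inv_mem_roots σ (hmonic.map ι)
    (IsAlgClosed.splits _) (nodup_roots hsep.map) (by simp [hconst])
    (fun β hβ ↦ by rw [hσ, ← inv_pow]; exact hroots β hβ)
  intro i hi
  have hcoeff : (-1) ^ n * ι (f.coeff i) = ι (f.coeff (n - i)) ^ q := by
    have := congrArg (coeff · i) hreverse
    simp only [coeff_C_mul, coeff_reverse, natDegree_map, hdeg, revAt_le hi, coeff_map] at this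
    simp only [hconst, map_pow, map_neg, map_one] at this
    rwa [← hσ]
  apply ι.injective
  simp only [map_mul, map_pow, map_neg, map_one]
  rw [← hcoeff, ← mul_assoc, ← mul_pow]
  simp

/-- Lemma: let `K` be a field with `q²` elements (`q = p^e` a prime power) and let
`f ∈ K[X]` be a monic separable polynomial of degree `n` with constant coefficient
`(-1)^n`, such that for every root `α` of `f` in an algebraic closure, `α^{-q}` is also
a root. Then the coefficients satisfy `a_i = (-1)^n · a_{n-i}^q` for all `i ≤ n`. -/
theorem stmt_2 (p e q : ℕ) (hp : p.Prime) (he : 0 < e) (hq : q = p ^ e)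
    {K : Type*} [Field K] [Fintype K] (hK : Fintype.card K = q ^ 2)
    (f : Polynomial K) (n : ℕ)
    (hmonic : f.Monic) (hdeg : f.natDegree = n)
    (hsep : f.Separable)
    (hconst : f.coeff 0 = (-1 : K) ^ n)
    (hroots : ∀ α ∈ (f.map (algebraMap K (AlgebraicClosure K))).roots,
      (α⁻¹) ^ q ∈ (f.map (algebraMap K (AlgebraicClosure K))).roots) :
    ∀ i ≤ n, f.coeff i = (-1 : K) ^ n * (f.coeff (n - i)) ^ q :=
  stmt_2_general p e q hp hq hK f n hmonic hdeg hsep hconst hroots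
end

section
/- Let q be an odd prime power, F_{q^3}/F_q the cubic extension with trace T(a) = a + a^q + a^{q^2} and norm N(a) = a^{1+q+q^2}. For arbitrary β, γ ∈ F_q there exists s ∈ F_{q^3} \ F_q such that T(s(s+β)) + N(s) = -γ. -/
/-!
Pick `a, b ∈ K` such that `P = X³ - aX² + bX + c` with `c = a² + βa + γ - 2b` has no root in `K`;
being cubic, `P` is irreducible, so it has a root `s ∈ L \ K` and its roots are the Frobenius
conjugates `s, s^q, s^{q²}`. By Vieta, `T(s) = a`, the second elementary symmetric function of the
conjugates is `b` and `N(s) = -c`, so `T(s² + βs) + N(s) = (a² - 2b) + βa - c = -γ`.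

The coefficients exist because `P(x) = f(x) + b(x - 2)` with `f` independent of `b`: once `a` is
chosen with `f(2) ≠ 0`, each `x ≠ 2` is a root for exactly one `b`, and `K` has more elements than
`K \ {2}`.
-/

open Polynomial

theorem exists_sq_add_mul_add_ne_zero {R : Type*} [CommRing R] (h2 : (2 : R) ≠ 0) (u v : R) :
    ∃ a : R, a ^ 2 + u * a + v ≠ 0 := by
  by_contra! h
  exact h2 (by linear_combination h 1 + h (-1) - 2 * h 0)

theorem Finite.exists_add_mul_sub_ne_zero {K : Type*} [Field K] [Finite K] (f : K → K) {x₀ : K}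
    (hx₀ : f x₀ ≠ 0) : ∃ b : K, ∀ x, f x + b * (x - x₀) ≠ 0 := by
  by_contra! h
  choose r hr using h
  have hr₀ : ∀ b, r b ≠ x₀ := fun b hb ↦ hx₀ (by simpa [hb] using hr b)
  have hinj : Function.Injective r := fun b b' hbb' ↦ by
    have hb := hr b
    rw [hbb'] at hb
    have : (b - b') * (r b' - x₀) = 0 := by linear_combination hb - hr b'
    exact sub_eq_zero.1 <| (mul_eq_zero.1 this).resolve_right (sub_ne_zero.2 (hr₀ b'))
  obtain ⟨b, hb⟩ := Finite.injective_iff_surjective.1 hinj x₀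
  exact hr₀ b hb

section MonicCubic

variable {K : Type*} [Field K]

noncomputable def monicCubic (a b c : K) : K[X] := X ^ 3 - C a * X ^ 2 + C b * X + C c

theorem natDegree_monicCubic (a b c : K) : (monicCubic a b c).natDegree = 3 := by
  unfold monicCubic
  compute_degree!

theorem aeval_monicCubic {L : Type*} [CommRing L] [Algebra K L] (a b c : K) (x : L) :
    aeval x (monicCubic a b c) =
      x ^ 3 - algebraMap K L a * x ^ 2 + algebraMap K L b * x + algebraMap K L c := by
  simp [monicCubic]

theorem exists_irreducible_monicCubic [Finite K] (h2 : (2 : K) ≠ 0) (β γ : K) :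
    ∃ a b : K, Irreducible (monicCubic a b (a ^ 2 + β * a + γ - 2 * b)) := by
  obtain ⟨a, ha⟩ := exists_sq_add_mul_add_ne_zero h2 (β - 4) (γ + 8)
  obtain ⟨b, hb⟩ := Finite.exists_add_mul_sub_ne_zero
    (fun x ↦ x ^ 3 - a * x ^ 2 + a ^ 2 + β * a + γ) (x₀ := 2) (by convert ha using 1; ring)
  refine ⟨a, b, irreducible_of_degree_le_three_of_not_isRoot (by simp [natDegree_monicCubic])
    fun x hx ↦ hb x ?_⟩
  simp only [IsRoot, monicCubic, eval_add, eval_sub, eval_mul, eval_pow, eval_C, eval_X] at hx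
  linear_combination hx

end MonicCubic

theorem vieta_cubic_of_ne {R : Type*} [CommRing R] [IsDomain R] {a b c s t u : R}
    (hst : s ≠ t) (hsu : s ≠ u) (htu : t ≠ u) (hs : s ^ 3 - a * s ^ 2 + b * s + c = 0)
    (ht : t ^ 3 - a * t ^ 2 + b * t + c = 0) (hu : u ^ 3 - a * u ^ 2 + b * u + c = 0) :
    s + t + u = a ∧ s * t + s * u + t * u = b ∧ s * t * u = -c := by
  have hst' : s ^ 2 + s * t + t ^ 2 - a * (s + t) + b = 0 :=
    (mul_eq_zero.1 (by linear_combination hs - ht)).resolve_left (sub_ne_zero.2 hst)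
  have hsu' : s ^ 2 + s * u + u ^ 2 - a * (s + u) + b = 0 :=
    (mul_eq_zero.1 (by linear_combination hs - hu)).resolve_left (sub_ne_zero.2 hsu)
  have hsum : s + t + u = a := sub_eq_zero.1 <|
    (mul_eq_zero.1 (by linear_combination hst' - hsu')).resolve_left (sub_ne_zero.2 htu)
  have he₂ : s * t + s * u + t * u = b := by linear_combination (s + t) * hsum - hst'
  exact ⟨hsum, he₂, by linear_combination hs - s ^ 2 * hsum + s * he₂⟩

theorem exists_aeval_eq_zero_of_natDegree_dvd_finrank {K L : Type*} [Field K] [Field L]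
    [Algebra K L] [Finite L] {P : K[X]} (hP : Irreducible P)
    (h : P.natDegree ∣ Module.finrank K L) : ∃ s : L, aeval s P = 0 := by
  have := Fact.mk hP
  obtain ⟨f⟩ := FiniteField.nonempty_algHom_of_finrank_dvd (F := K) (K := AdjoinRoot P) (L := L)
    (by rwa [(AdjoinRoot.powerBasis hP.ne_zero).finrank, AdjoinRoot.powerBasis_dim])
  exact ⟨f (AdjoinRoot.root P), by
    rw [aeval_algHom_apply, AdjoinRoot.aeval_eq, AdjoinRoot.mk_self, map_zero]⟩

theorem notMem_range_algebraMap_of_aeval_eq_zero {K L : Type*} [Field K] [CommRing L]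
    [Algebra K L] [FaithfulSMul K L] {P : K[X]} (hP : Irreducible P) (hdeg : P.natDegree ≠ 1)
    {s : L} (hs : aeval s P = 0) : s ∉ Set.range (algebraMap K L) := by
  rintro ⟨k, rfl⟩
  rw [aeval_algebraMap_apply, map_eq_zero_iff _ (FaithfulSMul.algebraMap_injective K L)] at hs
  exact hP.not_isRoot_of_natDegree_ne_one hdeg hs

namespace FiniteField

theorem two_ne_zero_of_odd_card {K : Type*} [Field K] [Fintype K]
    (h : Odd (Fintype.card K)) : (2 : K) ≠ 0 := by
  intro h2
  obtain ⟨k, hk⟩ := h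
  have := cast_card_eq_zero K
  rw [hk] at this
  push_cast at this
  simp [h2] at this

variable {K L : Type*} [Field K] [Fintype K]

theorem aeval_pow_card_eq_zero [CommRing L] [Algebra K L] {P : K[X]} {x : L}
    (hx : aeval x P = 0) : aeval (x ^ Fintype.card K) P = 0 := by
  rw [← frobeniusAlgHom_apply, aeval_algHom_apply, hx, map_zero]

variable [Field L] [Algebra K L]

theorem finrank_eq_of_card_eq_pow [Fintype L] {n : ℕ} (h : Fintype.card L = Fintype.card K ^ n) :
    Module.finrank K L = n :=
  Nat.pow_right_injective Fintype.one_lt_card (Module.card_eq_pow_finrank.symm.trans h)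

theorem mem_range_algebraMap_of_pow_card_eq_self [Finite L] {x : L}
    (hx : x ^ Fintype.card K = x) : x ∈ Set.range (algebraMap K L) := by
  rw [IsGalois.mem_range_algebraMap_iff_fixed]
  intro f
  obtain ⟨n, rfl⟩ := (bijective_frobeniusAlgEquivOfAlgebraic_pow K L).2 f
  rw [AlgEquiv.coe_pow, coe_frobeniusAlgEquivOfAlgebraic]
  exact Function.iterate_fixed hx _

theorem pow_card_ne_of_card_eq_pow_three [Fintype L] (hL : Fintype.card L = Fintype.card K ^ 3)
    {s : L} (hs : s ∉ Set.range (algebraMap K L)) :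
    s ≠ s ^ Fintype.card K ∧ s ≠ s ^ Fintype.card K ^ 2 ∧
      s ^ Fintype.card K ≠ s ^ Fintype.card K ^ 2 := by
  set q := Fintype.card K
  have hfix : ∀ {x : L}, x ^ q = x → x ∈ Set.range (algebraMap K L) :=
    mem_range_algebraMap_of_pow_card_eq_self
  refine ⟨fun h ↦ hs (hfix h.symm), fun h ↦ hs (hfix ?_), fun h ↦ hs (hfix ?_)⟩
  · calc s ^ q = (s ^ q ^ 2) ^ q := by rw [← h]
      _ = s ^ Fintype.card L := by rw [hL, ← pow_mul]; ring_nf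
      _ = s := pow_card s
  · rw [sq, pow_mul, ← frobeniusAlgHom_apply K, ← frobeniusAlgHom_apply K] at h
    exact ((frobeniusAlgHom K L).injective h).symm

end FiniteField

theorem stmt_4_general (q : ℕ) (hodd : Odd q)
    {K L : Type*} [Field K] [Field L] [Algebra K L] [Fintype K] [Fintype L]
    (hK : Fintype.card K = q) (hL : Fintype.card L = q ^ 3)
    (β γ : K) :
    ∃ s : L, s ∉ Set.range (algebraMap K L) ∧
      ((s * (s + algebraMap K L β)) + (s * (s + algebraMap K L β)) ^ q
          + (s * (s + algebraMap K L β)) ^ (q ^ 2))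
        + s ^ (1 + q + q ^ 2) = - algebraMap K L γ := by
  subst hK
  set q := Fintype.card K
  obtain ⟨a, b, hirr⟩ :=
    exists_irreducible_monicCubic (FiniteField.two_ne_zero_of_odd_card hodd) β γ
  obtain ⟨s, hs⟩ := exists_aeval_eq_zero_of_natDegree_dvd_finrank (L := L) hirr
    (by rw [natDegree_monicCubic, FiniteField.finrank_eq_of_card_eq_pow hL])
  have hsK := notMem_range_algebraMap_of_aeval_eq_zero hirr
    (by simp [natDegree_monicCubic]) hs
  have hsq := FiniteField.aeval_pow_card_eq_zero hs
  have hsq₂ := FiniteField.aeval_pow_card_eq_zero hsq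
  rw [← pow_mul, ← sq] at hsq₂
  rw [aeval_monicCubic] at hs hsq hsq₂
  obtain ⟨hst, hsu, htu⟩ := FiniteField.pow_card_ne_of_card_eq_pow_three hL hsK
  obtain ⟨hsum, he₂, hprod⟩ := vieta_cubic_of_ne hst hsu htu hs hsq hsq₂
  have hfrob (x : L) : (x * (x + algebraMap K L β)) ^ q = x ^ q * (x ^ q + algebraMap K L β) := by
    simp only [q, ← FiniteField.frobeniusAlgHom_apply K, map_mul, map_add, AlgHom.commutes]
  refine ⟨s, hsK, ?_⟩
  rw [sq q, pow_mul, hfrob, hfrob, ← pow_mul, ← sq, pow_add, pow_add, pow_one]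
  simp only [map_sub, map_add, map_mul, map_pow, map_ofNat] at hprod
  linear_combination (s + s ^ q + s ^ q ^ 2 + algebraMap K L a + algebraMap K L β) * hsum
    - 2 * he₂ + hprod

/-- Let `q` be an odd prime power, `K` a field with `q` elements and `L/K` the cubic
extension (so `L` has `q³` elements), with trace `T(a) = a + a^q + a^{q²}` and norm
`N(a) = a^{1+q+q²}`. For arbitrary `β, γ ∈ K` there exists `s ∈ L \ K` such that
`T(s(s+β)) + N(s) = -γ`. -/
theorem stmt_4 (p e q : ℕ) (hp : p.Prime) (hq : q = p ^ e) (he : 0 < e) (hodd : Odd q)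
    {K L : Type*} [Field K] [Field L] [Algebra K L] [Fintype K] [Fintype L]
    (hK : Fintype.card K = q) (hL : Fintype.card L = q ^ 3)
    (β γ : K) :
    ∃ s : L, s ∉ Set.range (algebraMap K L) ∧
      ((s * (s + algebraMap K L β)) + (s * (s + algebraMap K L β)) ^ q
          + (s * (s + algebraMap K L β)) ^ (q ^ 2))
        + s ^ (1 + q + q ^ 2) = - algebraMap K L γ :=
  stmt_4_general q hodd hK hL β γ
end

section
/- For arbitrary β, γ in F_q with q odd, there exist σ₁, σ₂ ∈ F_q such that the cubic polynomial X³ - σ₁X² + σ₂X + (σ₁² - 2σ₂ + βσ₁ + γ) is irreducible over F_q. -/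
open Polynomial

/-- For arbitrary `β, γ` in a finite field `K` with `q` elements, `q` an odd prime power,
there exist `σ₁, σ₂ ∈ K` such that the cubic
`X³ - σ₁X² + σ₂X + (σ₁² - 2σ₂ + βσ₁ + γ)` is irreducible over `K`. -/
theorem stmt_5 (p e q : ℕ) (hp : p.Prime) (hq : q = p ^ e) (he : 0 < e) (hodd : Odd q)
    {K : Type*} [Field K] [Fintype K] (hK : Fintype.card K = q)
    (β γ : K) :
    ∃ σ₁ σ₂ : K, Irreducible
      (X ^ 3 - C σ₁ * X ^ 2 + C σ₂ * X + C (σ₁ ^ 2 - 2 * σ₂ + β * σ₁ + γ)) := by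
  classical
  -- card K ≥ 3
  have hcard2 : 2 ≤ Fintype.card K := Fintype.one_lt_card
  have hoddK : Odd (Fintype.card K) := hK ▸ hodd
  have hcard3 : 3 ≤ Fintype.card K := by
    have hne : Fintype.card K ≠ 2 := by
      intro h2; rw [h2, Nat.odd_iff] at hoddK; omega
    omega
  -- choose σ₁ with σ₁² + (β-4)σ₁ + (8+γ) ≠ 0
  set h : K[X] := X ^ 2 + C (β - 4) * X + C (8 + γ) with hh
  have hhne : h ≠ 0 := by
    have : h.natDegree = 2 := by unfold h; compute_degree!
    intro h0; rw [h0, natDegree_zero] at this; omega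
  have hroots : h.roots.toFinset.card < Fintype.card K := by
    calc h.roots.toFinset.card ≤ Multiset.card h.roots := h.roots.toFinset_card_le
      _ ≤ h.natDegree := h.card_roots'
      _ ≤ 2 := by unfold h; compute_degree!
      _ < Fintype.card K := hcard3
  obtain ⟨σ₁, hσ₁⟩ : ∃ σ₁ : K, σ₁ ∉ h.roots.toFinset := by
    by_contra hc
    push_neg at hc
    have := Finset.card_le_card (fun x _ => hc x : (Finset.univ : Finset K) ⊆ h.roots.toFinset)
    rw [Finset.card_univ] at this
    omega
  have hσ₁' : σ₁ ^ 2 + (β - 4) * σ₁ + (8 + γ) ≠ 0 := by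
    intro h0
    apply hσ₁
    rw [Multiset.mem_toFinset, mem_roots hhne]
    simp [hh, IsRoot, h0]
  -- choose σ₂ avoiding the bad set
  set B : Finset K := (Finset.univ.erase (2 : K)).image
      (fun x => -(x ^ 3 - σ₁ * x ^ 2 + σ₁ ^ 2 + β * σ₁ + γ) / (x - 2)) with hB
  obtain ⟨σ₂, hσ₂⟩ : ∃ σ₂ : K, σ₂ ∉ B := by
    by_contra hc
    push_neg at hc
    have h1 := Finset.card_le_card (fun x _ => hc x : (Finset.univ : Finset K) ⊆ B)
    have h2 : B.card ≤ (Finset.univ.erase (2 : K)).card := Finset.card_image_le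
    rw [Finset.card_erase_of_mem (Finset.mem_univ _), Finset.card_univ] at h2
    rw [Finset.card_univ] at h1
    omega
  refine ⟨σ₁, σ₂, ?_⟩
  set f : K[X] := X ^ 3 - C σ₁ * X ^ 2 + C σ₂ * X + C (σ₁ ^ 2 - 2 * σ₂ + β * σ₁ + γ) with hf
  have hdeg : f.natDegree = 3 := by unfold f; compute_degree!
  have hfne : f ≠ 0 := by
    intro h0; rw [h0, natDegree_zero] at hdeg; omega
  rw [irreducible_iff_roots_eq_zero_of_degree_le_three (by omega) (by omega)]
  rw [Multiset.eq_zero_iff_forall_notMem]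
  intro x hx
  rw [mem_roots hfne] at hx
  have hev : x ^ 3 - σ₁ * x ^ 2 + σ₂ * x + (σ₁ ^ 2 - 2 * σ₂ + β * σ₁ + γ) = 0 := by
    have := hx
    simpa [hf, IsRoot] using this
  by_cases hx2 : x = 2
  · apply hσ₁'
    rw [hx2] at hev
    linear_combination hev
  · apply hσ₂
    rw [hB, Finset.mem_image]
    refine ⟨x, Finset.mem_erase.mpr ⟨hx2, Finset.mem_univ _⟩, ?_⟩
    have hx2' : x - 2 ≠ 0 := sub_ne_zero.mpr hx2
    field_simp
    linear_combination -hev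
end

section
/- Let q = 2^{2m+1}, and let ζ be a root of unity of order q + 2^{m+1} + 1 or q - 2^{m+1} + 1 in an algebraic closure of F_2. Set a = ζ + ζ^{-1} + ζ^q + ζ^{-q} and b = ζ^{1+q} + ζ^{-1-q} + ζ^{-1+q} + ζ^{1-q}. Then a, b ∈ F_q, the minimal polynomial of ζ over F_q is X⁴ + aX³ + bX² + aX + 1, and b = a^{2^{m+1}}. -/
open Polynomial

/-- Let `q = 2^{2m+1}` and let `ζ` be a root of unity of order `q + 2^{m+1} + 1` or
`q - 2^{m+1} + 1` in an algebraic closure of `F_2`. With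
`a = ζ + ζ⁻¹ + ζ^q + ζ^{-q}` and `b = ζ^{1+q} + ζ^{-1-q} + ζ^{-1+q} + ζ^{1-q}`,
the elements `a, b` lie in `F_q` (i.e. are fixed by the `q`-power map), the minimal
polynomial of `ζ` over `F_q` is `(X-ζ)(X-ζ^q)(X-ζ⁻¹)(X-ζ^{-q}) = X⁴+aX³+bX²+aX+1`,
and `b = a^{2^{m+1}}`. -/
theorem stmt_11 (m q : ℕ) (hq : q = 2 ^ (2 * m + 1))
    (ζ : AlgebraicClosure (ZMod 2))
    (hζ : orderOf ζ = q + 2 ^ (m + 1) + 1 ∨ orderOf ζ = q - 2 ^ (m + 1) + 1)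
    (a b : AlgebraicClosure (ZMod 2))
    (ha : a = ζ + ζ⁻¹ + ζ ^ q + (ζ ^ q)⁻¹)
    (hb : b = ζ ^ (1 + q) + (ζ ^ (1 + q))⁻¹ + ζ⁻¹ * ζ ^ q + ζ * (ζ ^ q)⁻¹) :
    a ^ q = a ∧ b ^ q = b ∧
    (X - C ζ) * (X - C (ζ ^ q)) * (X - C ζ⁻¹) * (X - C (ζ ^ q)⁻¹)
      = X ^ 4 + C a * X ^ 3 + C b * X ^ 2 + C a * X + 1 ∧
    b = a ^ 2 ^ (m + 1) := by
  have hs_le : 2 ^ (m + 1) ≤ q := by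
    rw [hq]; exact Nat.pow_le_pow_right (by norm_num) (by omega)
  have hn_pos : 0 < orderOf ζ := by rcases hζ with h | h <;> omega
  have hζ1 : ζ ^ orderOf ζ = 1 := pow_orderOf_eq_one ζ
  have hζ0 : ζ ≠ 0 := by
    intro h
    rw [h] at hζ1 hn_pos
    rw [zero_pow hn_pos.ne'] at hζ1
    exact zero_ne_one hζ1
  have hy0 : ζ ^ q ≠ 0 := pow_ne_zero _ hζ0
  have hkey : (q + 2 ^ (m + 1) + 1) * (q - 2 ^ (m + 1) + 1) = q ^ 2 + 1 := by
    have h2q : 2 ^ (m + 1) * 2 ^ (m + 1) = 2 * q := by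
      rw [hq, ← pow_add (2 : ℕ) (m + 1) (m + 1),
        show m + 1 + (m + 1) = (2 * m + 1) + 1 by omega, pow_succ]
      ring
    zify [hs_le]
    have h2q' : (2 : ℤ) ^ (m + 1) * 2 ^ (m + 1) = 2 * (q : ℤ) := by exact_mod_cast h2q
    linear_combination (-1 : ℤ) * h2q'
  have hdvd : orderOf ζ ∣ q ^ 2 + 1 := by
    rcases hζ with h | h
    · rw [h, ← hkey]; exact Dvd.intro _ rfl
    · rw [h, ← hkey]; exact Dvd.intro_left _ rfl
  have hq2 : ζ ^ q ^ 2 = ζ⁻¹ := by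
    have h1 : ζ ^ (q ^ 2 + 1) = 1 := orderOf_dvd_iff_pow_eq_one.mp hdvd
    rw [pow_succ] at h1
    exact eq_inv_of_mul_eq_one_left h1
  have h1 : (ζ ^ q) ^ q = ζ⁻¹ := by rw [← pow_mul, ← sq, hq2]
  have hfr : ∀ x y : AlgebraicClosure (ZMod 2), (x + y) ^ q = x ^ q + y ^ q := by
    intro x y; rw [hq]; exact add_pow_char_pow x y 2 (2 * m + 1)
  have hb' : b = ζ * ζ ^ q + ζ⁻¹ * (ζ ^ q)⁻¹ + ζ⁻¹ * ζ ^ q + ζ * (ζ ^ q)⁻¹ := by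
    rw [hb, pow_add ζ 1 q, pow_one, mul_inv]
  -- Part 1
  have part1 : a ^ q = a := by
    rw [ha, hfr, hfr, hfr]
    simp only [inv_pow, h1, inv_inv]
    ring
  -- Part 2
  have part2 : b ^ q = b := by
    rw [hb', hfr, hfr, hfr]
    simp only [mul_pow, inv_pow, h1, inv_inv]
    ring
  -- Part 3
  have hu : ζ * ζ⁻¹ = 1 := mul_inv_cancel₀ hζ0
  have hv : ζ ^ q * (ζ ^ q)⁻¹ = 1 := mul_inv_cancel₀ hy0
  have part3 : (X - C ζ) * (X - C (ζ ^ q)) * (X - C ζ⁻¹) * (X - C (ζ ^ q)⁻¹)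
      = X ^ 4 + C a * X ^ 3 + C b * X ^ 2 + C a * X + 1 := by
    have hu' : C ζ * C ζ⁻¹ = (1 : (AlgebraicClosure (ZMod 2))[X]) := by
      rw [← C_mul, hu, C_1]
    have hv' : C (ζ ^ q) * C (ζ ^ q)⁻¹ = (1 : (AlgebraicClosure (ZMod 2))[X]) := by
      rw [← C_mul, hv, C_1]
    have h2 : (2 : (AlgebraicClosure (ZMod 2))[X]) = 0 := CharTwo.two_eq_zero
    rw [ha, hb']
    simp only [map_add, map_mul]
    linear_combination
      (X ^ 2 - (C (ζ ^ q) + C (ζ ^ q)⁻¹) * X + C (ζ ^ q) * C (ζ ^ q)⁻¹) * hu' +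
      (X ^ 2 - (C ζ + C ζ⁻¹) * X + 1) * hv' +
      (X ^ 2 - (C ζ + C ζ⁻¹ + C (ζ ^ q) + C (ζ ^ q)⁻¹) * (X ^ 3 + X)) * h2
  -- Part 4
  have hfr2 : ∀ x y : AlgebraicClosure (ZMod 2),
      (x + y) ^ 2 ^ (m + 1) = x ^ 2 ^ (m + 1) + y ^ 2 ^ (m + 1) :=
    fun x y => add_pow_char_pow x y 2 (m + 1)
  have part4 : b = a ^ 2 ^ (m + 1) := by
    have has : a ^ 2 ^ (m + 1) = ζ ^ 2 ^ (m + 1) + (ζ ^ 2 ^ (m + 1))⁻¹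
        + (ζ ^ 2 ^ (m + 1)) ^ q + ((ζ ^ 2 ^ (m + 1)) ^ q)⁻¹ := by
      rw [ha, hfr2, hfr2, hfr2, inv_pow, inv_pow, pow_right_comm]
    rcases hζ with h | h
    · -- order = q + 2^(m+1) + 1 : ζ^s = (ζ * ζ^q)⁻¹
      have hcase : ζ ^ 2 ^ (m + 1) = (ζ * ζ ^ q)⁻¹ := by
        apply eq_inv_of_mul_eq_one_left
        calc ζ ^ 2 ^ (m + 1) * (ζ * ζ ^ q)
            = ζ ^ (2 ^ (m + 1) + (1 + q)) := by
              rw [pow_add ζ (2 ^ (m + 1)) (1 + q), pow_add ζ 1 q, pow_one]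
          _ = 1 := by rw [show 2 ^ (m + 1) + (1 + q) = orderOf ζ by omega, hζ1]
      rw [has, hcase, hb']
      simp only [mul_inv, inv_inv, mul_pow, inv_pow, h1]
      ring
    · -- order = q - 2^(m+1) + 1 : ζ^s = ζ * ζ^q
      have hcase : ζ ^ 2 ^ (m + 1) = ζ * ζ ^ q := by
        calc ζ ^ 2 ^ (m + 1)
            = ζ ^ 2 ^ (m + 1) * ζ ^ orderOf ζ := by rw [hζ1, mul_one]
          _ = ζ ^ (2 ^ (m + 1) + orderOf ζ) := (pow_add ζ _ _).symm
          _ = ζ ^ (1 + q) := by rw [show 2 ^ (m + 1) + orderOf ζ = 1 + q by omega]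
          _ = ζ * ζ ^ q := by rw [pow_add ζ 1 q, pow_one]
      rw [has, hcase, hb']
      simp only [mul_inv, inv_inv, mul_pow, inv_pow, h1]
      ring
  exact ⟨part1, part2, part3, part4⟩
end

section
/- Let q = 2^{2m+1} and t ∈ F̄_q. If x = (x₁, x₂, x₃, x₄) satisfies D·φ_q(x) = x for the Suzuki cross-section matrix D, then x₂ = x₁^q, x₄ = x₁^{q²}, x₃ = t·x₁^{q²} + x₁^{q³}, and x₁ is a root of f(X) = X^{q⁴} + t^q X^{q³} + t^{2^{m+1}} X^{q²} + t X^q + X. Conversely every root X of f yields such a solution; in particular f has q⁴ roots when D is invertible and its root set is an F_q-vector space. -/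
open Matrix Polynomial

/-- Let `q = 2^{2m+1}` and `t ∈ F̄_q` (an algebraically closed field of characteristic 2).
If `x = (x₁,x₂,x₃,x₄)` satisfies `D·φ_q(x) = x` for the Suzuki cross-section matrix `D`,
then `x₂ = x₁^q`, `x₄ = x₁^{q²}`, `x₃ = t·x₁^{q²} + x₁^{q³}`, and `x₁` is a root of
`f(X) = X^{q⁴} + t^q X^{q³} + t^{2^{m+1}} X^{q²} + t X^q + X`. Conversely every root of
`f` arises as first coordinate of such a solution; `f` has `q⁴` roots when `D` is
invertible, and the set of roots of `f` is an `F_q`-vector space. -/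
theorem stmt_12 (m q : ℕ) (hq : q = 2 ^ (2 * m + 1))
    {L : Type*} [Field L] [IsAlgClosed L] [CharP L 2] (t : L)
    (D : Matrix (Fin 4) (Fin 4) L)
    (hD : D = !![t, t ^ 2 ^ (m + 1), 1, 0; 1, 0, 0, 0; 0, t, 0, 1; 0, 1, 0, 0])
    (f : L → L)
    (hf : ∀ X : L, f X =
      X ^ q ^ 4 + t ^ q * X ^ q ^ 3 + t ^ 2 ^ (m + 1) * X ^ q ^ 2 + t * X ^ q + X) :
    (∀ x : Fin 4 → L, D.mulVec (fun i => x i ^ q) = x →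
      x 1 = x 0 ^ q ∧ x 3 = x 0 ^ q ^ 2 ∧ x 2 = t * x 0 ^ q ^ 2 + x 0 ^ q ^ 3
        ∧ f (x 0) = 0) ∧
    (∀ X : L, f X = 0 → ∃ x : Fin 4 → L, D.mulVec (fun i => x i ^ q) = x ∧ x 0 = X) ∧
    (IsUnit D → Set.ncard {X : L | f X = 0} = q ^ 4) ∧
    (∀ X Y : L, f X = 0 → f Y = 0 → f (X + Y) = 0) ∧
    (∀ c X : L, c ^ q = c → f X = 0 → f (c * X) = 0) := by
  classical
  haveI : Fact (Nat.Prime 2) := ⟨Nat.prime_two⟩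
  have hq0 : 0 < q := by rw [hq]; positivity
  have frob : ∀ a b : L, (a + b) ^ q = a ^ q + b ^ q := by
    intro a b; rw [hq]; exact add_pow_char_pow ..
  have pp1 : ∀ a : L, (a ^ q) ^ q = a ^ q ^ 2 := fun a => by rw [← pow_mul, ← sq]
  have pp2 : ∀ a : L, (a ^ q ^ 2) ^ q = a ^ q ^ 3 := fun a => by rw [← pow_mul, ← pow_succ]
  have pp3 : ∀ a : L, (a ^ q ^ 3) ^ q = a ^ q ^ 4 := fun a => by rw [← pow_mul, ← pow_succ]
  subst hD
  refine ⟨?_, ?_, ?_, ?_, ?_⟩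
  · intro x h
    have h0 := congrFun h 0
    have h1 := congrFun h 1
    have h2 := congrFun h 2
    have h3 := congrFun h 3
    simp [mulVec, dotProduct, Fin.sum_univ_four] at h0 h1 h2 h3
    have e1 : x 1 = x 0 ^ q := h1.symm
    have e3 : x 3 = x 0 ^ q ^ 2 := by rw [← h3, e1, pp1]
    have e2 : x 2 = t * x 0 ^ q ^ 2 + x 0 ^ q ^ 3 := by rw [← h2, e1, e3, pp1, pp2]
    refine ⟨e1, e3, e2, ?_⟩
    rw [hf]
    rw [e1, e2] at h0
    rw [frob, mul_pow, pp1, pp2, pp3] at h0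
    have : x 0 ^ q ^ 4 + t ^ q * x 0 ^ q ^ 3 + t ^ 2 ^ (m + 1) * x 0 ^ q ^ 2 + t * x 0 ^ q
        = x 0 := by linear_combination h0
    rw [this, CharTwo.add_self_eq_zero]
  · intro X hX
    have hfx : X ^ q ^ 4 + t ^ q * X ^ q ^ 3 + t ^ 2 ^ (m + 1) * X ^ q ^ 2 + t * X ^ q + X
        = 0 := by rw [← hf X]; exact hX
    have h5 : X ^ q ^ 4 + t ^ q * X ^ q ^ 3 + t ^ 2 ^ (m + 1) * X ^ q ^ 2 + t * X ^ q = X := by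
      have := eq_neg_of_add_eq_zero_left hfx
      rwa [CharTwo.neg_eq] at this
    refine ⟨![X, X ^ q, t * X ^ q ^ 2 + X ^ q ^ 3, X ^ q ^ 2], funext fun i => ?_, rfl⟩
    fin_cases i
    · simp [mulVec, dotProduct, Fin.sum_univ_four]
      rw [frob, mul_pow, pp1, pp2, pp3]
      linear_combination h5
    · simp [mulVec, dotProduct, Fin.sum_univ_four]
    · simp [mulVec, dotProduct, Fin.sum_univ_four]
      rw [pp1, pp2]
    · simp [mulVec, dotProduct, Fin.sum_univ_four]
      exact pp1 X
  · intro _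
    set P : L[X] := X ^ q ^ 4 + (C (t ^ q) * X ^ q ^ 3 + C (t ^ 2 ^ (m + 1)) * X ^ q ^ 2
      + C t * X ^ q + X) with hP
    have hq1 : 1 < q := by
      rw [hq]
      calc 1 < 2 ^ 1 := by norm_num
        _ ≤ 2 ^ (2 * m + 1) := Nat.pow_le_pow_right (by norm_num) (by omega)
    have hb : ∀ (a : L) (k : ℕ), (C a * (X : L[X]) ^ k).natDegree ≤ k :=
      fun a k => (natDegree_C_mul_le a _).trans (natDegree_X_pow k).le
    have hlt : (C (t ^ q) * X ^ q ^ 3 + C (t ^ 2 ^ (m + 1)) * X ^ q ^ 2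
        + C t * X ^ q + (X : L[X])).natDegree < q ^ 4 := by
      have h34 : q ^ 3 < q ^ 4 := Nat.pow_lt_pow_right hq1 (by omega)
      refine lt_of_le_of_lt ?_ h34
      refine natDegree_add_le_of_degree_le (natDegree_add_le_of_degree_le
        (natDegree_add_le_of_degree_le ?_ ?_) ?_) ?_
      · exact hb _ _
      · exact (hb _ _).trans (Nat.pow_le_pow_right (by omega) (by omega))
      · exact (hb _ _).trans (Nat.le_self_pow (by norm_num) q)
      · exact natDegree_X_le.trans (Nat.one_le_pow _ _ (by omega))
    have hdeg : P.natDegree = q ^ 4 := by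
      rw [hP, natDegree_add_eq_left_of_natDegree_lt (by rwa [natDegree_X_pow]),
        natDegree_X_pow]
    have hP0 : P ≠ 0 := by
      intro h0
      rw [h0, natDegree_zero] at hdeg
      have : 0 < q ^ 4 := by positivity
      omega
    have hcq : (q : L) = 0 := by
      rw [CharP.cast_eq_zero_iff L 2, hq]
      exact dvd_pow_self 2 (by omega)
    have hder : derivative P = 1 := by
      rw [hP]
      simp only [derivative_add, derivative_X, derivative_C_mul, derivative_X_pow,
        Nat.cast_pow, hcq]
      simp
    have hsep : P.Separable := by
      rw [Polynomial.Separable, hder]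
      exact isCoprime_one_right
    have heval : ∀ z : L, P.eval z = f z := by
      intro z
      rw [hf]
      simp only [hP, eval_add, eval_mul, eval_pow, eval_C, eval_X]
      ring
    have hset : {X : L | f X = 0} = ↑P.roots.toFinset := by
      ext z
      simp only [Set.mem_setOf_eq, Finset.mem_coe, Multiset.mem_toFinset,
        mem_roots hP0, IsRoot.def, heval]
    rw [hset, Set.ncard_coe_finset, Multiset.toFinset_card_of_nodup (nodup_roots hsep),
      ← hdeg]
    exact (splits_iff_card_roots.mp (IsAlgClosed.splits P))
  · intro X Y hX hY
    rw [hf] at hX hY ⊢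
    have h4 : ∀ k : ℕ, (X + Y) ^ q ^ k = X ^ q ^ k + Y ^ q ^ k := by
      intro k; rw [hq, ← pow_mul]; exact add_pow_char_pow ..
    rw [frob, h4, h4, h4]
    have : X ^ q ^ 4 + Y ^ q ^ 4 + t ^ q * (X ^ q ^ 3 + Y ^ q ^ 3)
        + t ^ 2 ^ (m + 1) * (X ^ q ^ 2 + Y ^ q ^ 2) + t * (X ^ q + Y ^ q) + (X + Y)
        = (X ^ q ^ 4 + t ^ q * X ^ q ^ 3 + t ^ 2 ^ (m + 1) * X ^ q ^ 2 + t * X ^ q + X)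
        + (Y ^ q ^ 4 + t ^ q * Y ^ q ^ 3 + t ^ 2 ^ (m + 1) * Y ^ q ^ 2 + t * Y ^ q + Y) := by
      ring
    rw [this, hX, hY, add_zero]
  · intro c X hc hX
    have hck : ∀ k : ℕ, c ^ q ^ k = c := by
      intro k
      induction k with
      | zero => simp
      | succ n ih => rw [pow_succ, pow_mul, ih, hc]
    rw [hf] at hX ⊢
    have h4 : ∀ k : ℕ, (c * X) ^ q ^ k = c * X ^ q ^ k := by
      intro k; rw [mul_pow, hck]
    rw [h4, h4, h4, mul_pow c X q, hc]
    calc c * X ^ q ^ 4 + t ^ q * (c * X ^ q ^ 3) + t ^ 2 ^ (m + 1) * (c * X ^ q ^ 2)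
        + t * (c * X ^ q) + c * X
        = c * (X ^ q ^ 4 + t ^ q * X ^ q ^ 3 + t ^ 2 ^ (m + 1) * X ^ q ^ 2 + t * X ^ q + X) := by
          ring
      _ = 0 := by rw [hX, mul_zero]
end

section
/- Let q = 3^{2m+1} and let ζ be a root of unity of order q + 3^{m+1} + 1 or q - 3^{m+1} + 1 in F̄_3. Set β = -Σ_{j=0}^{2} (ζ^{q^j} + ζ^{-q^j}). Then β ∈ F_q, and the norm polynomial h(X) = ∏_{j=0}^{2} (X - ζ^{q^j})(X - ζ^{-q^j}) equals X⁶ + βX⁵ + γX⁴ + δX³ + γX² + βX + 1 with γ = -β^{3^{m+1}} - β and δ = 1 + β^{3^{m+1}} - β². -/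
open Polynomial

set_option maxHeartbeats 2000000 in
/-- Let `q = 3^{2m+1}` and let `ζ ∈ F̄_3` be a root of unity of order `q + 3^{m+1} + 1`
or `q - 3^{m+1} + 1`. Set `β = -Σ_{j=0}^{2} (ζ^{q^j} + ζ^{-q^j})`. Then `β ∈ F_q`
(i.e. `β^q = β`) and
`∏_{j=0}^{2} (X - ζ^{q^j})(X - ζ^{-q^j}) = X⁶ + βX⁵ + γX⁴ + δX³ + γX² + βX + 1`
with `γ = -β^{3^{m+1}} - β` and `δ = 1 + β^{3^{m+1}} - β²`. -/
theorem stmt_15 (m q : ℕ) (hq : q = 3 ^ (2 * m + 1))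
    (ζ : AlgebraicClosure (ZMod 3))
    (hζ : orderOf ζ = q + 3 ^ (m + 1) + 1 ∨ orderOf ζ = q - 3 ^ (m + 1) + 1)
    (β γ δ : AlgebraicClosure (ZMod 3))
    (hβ : β = -(∑ j ∈ Finset.range 3, (ζ ^ q ^ j + (ζ ^ q ^ j)⁻¹)))
    (hγ : γ = -β ^ 3 ^ (m + 1) - β)
    (hδ : δ = 1 + β ^ 3 ^ (m + 1) - β ^ 2) :
    β ^ q = β ∧
    (∏ j ∈ Finset.range 3, ((X - C (ζ ^ q ^ j)) * (X - C ((ζ ^ q ^ j)⁻¹))))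
      = X ^ 6 + C β * X ^ 5 + C γ * X ^ 4 + C δ * X ^ 3 + C γ * X ^ 2 + C β * X + 1 := by
  haveI : Fact (Nat.Prime 3) := ⟨by norm_num⟩
  set t := 3 ^ (m + 1) with hts
  have hqt : t ≤ q := by
    rw [hq, hts]; exact Nat.pow_le_pow_right (by norm_num) (by omega)
  have ht3 : t * t = 3 * q := by
    rw [hts, hq, ← pow_add, ← pow_succ']
    congr 1; omega
  have ht3' : (t : ℤ) * t = 3 * q := by exact_mod_cast ht3
  have hnk : ζ ^ ((q + t + 1) * (q - t + 1)) = 1 := by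
    rcases hζ with h | h
    · rw [pow_mul, ← h, pow_orderOf_eq_one, one_pow]
    · rw [mul_comm, pow_mul, ← h, pow_orderOf_eq_one, one_pow]
  have hzne : ζ ≠ 0 := by
    intro h0
    rw [h0, zero_pow (Nat.mul_ne_zero (by omega) (by omega))] at hnk
    exact one_ne_zero hnk.symm
  have harith : q * q + 1 = (q + t + 1) * (q - t + 1) + q := by
    zify [hqt]; linear_combination ht3'
  have hq21 : ζ ^ (q * q) * ζ = ζ ^ q := by
    rw [← pow_succ, harith, pow_add, hnk, one_mul]
  have harith3 : q * q * q + 1 = ((q + t + 1) * (q - t + 1)) * (q + 1) := by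
    zify [hqt]; linear_combination ((q : ℤ) + 1) * ht3'
  have hq31 : ζ ^ (q * q * q) * ζ = 1 := by
    rw [← pow_succ, harith3, pow_mul, hnk, one_pow]
  have hq3inv : ζ ^ (q * q * q) = ζ⁻¹ := eq_inv_of_mul_eq_one_left hq31
  set A := ζ ^ q with hA
  set B := ζ ^ (q * q) with hBdef
  have hAne : A ≠ 0 := pow_ne_zero _ hzne
  have hBne : B ≠ 0 := pow_ne_zero _ hzne
  have hAq : A ^ q = B := by rw [hA, hBdef, ← pow_mul]
  have hBq : B ^ q = ζ⁻¹ := by rw [hBdef, ← pow_mul]; exact hq3inv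
  have hB : B = A * ζ⁻¹ := by
    field_simp
    linear_combination hq21
  have hβ' : β = -(ζ + A + B + (ζ⁻¹ + A⁻¹ + B⁻¹)) := by
    rw [hβ, Finset.sum_range_succ, Finset.sum_range_succ, Finset.sum_range_one,
      pow_zero, pow_one, pow_one, sq]
    ring
  have hfrobq : ∀ x y : (AlgebraicClosure (ZMod 3)), (x + y) ^ q = x ^ q + y ^ q := by
    intro x y; rw [hq]; exact add_pow_char_pow ..
  have hoddq : Odd q := by rw [hq]; exact Odd.pow ⟨1, by norm_num⟩
  have hβq : β ^ q = β := by
    rw [hβ', hoddq.neg_pow]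
    rw [hfrobq, hfrobq, hfrobq, hfrobq, hfrobq]
    rw [inv_pow, inv_pow, inv_pow, hAq, hBq, inv_inv, ← hA]
    ring
  have hfrobt : ∀ x y : (AlgebraicClosure (ZMod 3)), (x + y) ^ t = x ^ t + y ^ t := by
    intro x y; rw [hts]; exact add_pow_char_pow ..
  have hoddt : Odd t := by rw [hts]; exact Odd.pow ⟨1, by norm_num⟩
  have hw1 : (ζ * A) ^ q = A * B := by rw [mul_pow, hAq, ← hA]
  have hw2 : (ζ * A) ^ (q * q) = B * ζ⁻¹ := by rw [pow_mul, hw1, mul_pow, hAq, hBq]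
  have hzt : ζ ^ t = (ζ * A)⁻¹ ∨ ζ ^ t = ζ * A := by
    rcases hζ with h | h
    · left
      have h2 : ζ ^ t * (ζ * ζ ^ q) = ζ ^ (t + (1 + q)) := by
        rw [pow_add, pow_add, pow_one]
      have h1 : ζ ^ t * (ζ * A) = 1 := by
        rw [hA, h2, show t + (1 + q) = q + t + 1 from by omega, ← h, pow_orderOf_eq_one]
      exact eq_inv_of_mul_eq_one_left h1
    · right
      have h1 : ζ ^ (q + 1) = ζ ^ t := by
        rw [show q + 1 = (q - t + 1) + t from by omega, pow_add, ← h,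
          pow_orderOf_eq_one, one_mul]
      have h2 : ζ * A = ζ ^ (q + 1) := by rw [hA, pow_succ, mul_comm]
      rw [h2, h1]
  have hAt : A ^ t = (ζ ^ t) ^ q := by rw [hA, ← pow_mul, ← pow_mul, mul_comm]
  have hBt : B ^ t = (ζ ^ t) ^ (q * q) := by
    rw [hBdef, ← pow_mul, ← pow_mul]
    congr 1
    ring
  have hβt : β ^ t = -(ζ * A + A * B + B * ζ⁻¹ + (ζ⁻¹ * A⁻¹ + A⁻¹ * B⁻¹ + B⁻¹ * ζ)) := by
    rcases hzt with h | h
    · have e2 : (ζ ^ t) ^ q = (A * B)⁻¹ := by rw [h, inv_pow, hw1]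
      have e3 : (ζ ^ t) ^ (q * q) = (B * ζ⁻¹)⁻¹ := by rw [h, inv_pow, hw2]
      rw [hβ', hoddt.neg_pow]
      rw [hfrobt, hfrobt, hfrobt, hfrobt, hfrobt]
      rw [inv_pow, inv_pow, inv_pow, hAt, hBt, e2, e3, h]
      rw [inv_inv, inv_inv, inv_inv, mul_inv, mul_inv, mul_inv, inv_inv]
      ring
    · have e2 : (ζ ^ t) ^ q = A * B := by rw [h, hw1]
      have e3 : (ζ ^ t) ^ (q * q) = B * ζ⁻¹ := by rw [h, hw2]
      rw [hβ', hoddt.neg_pow]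
      rw [hfrobt, hfrobt, hfrobt, hfrobt, hfrobt]
      rw [inv_pow, inv_pow, inv_pow, hAt, hBt, e2, e3, h]
      rw [mul_inv, mul_inv, mul_inv, inv_inv]
  refine ⟨hβq, ?_⟩
  have hBi : B⁻¹ = A⁻¹ * ζ := by rw [hB, mul_inv, inv_inv]
  have hprod : (∏ j ∈ Finset.range 3, ((X - C (ζ ^ q ^ j)) * (X - C ((ζ ^ q ^ j)⁻¹))))
      = (X - C ζ) * (X - C ζ⁻¹) * ((X - C A) * (X - C A⁻¹)) * ((X - C B) * (X - C B⁻¹)) := by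
    rw [Finset.prod_range_succ, Finset.prod_range_succ, Finset.prod_range_one,
      pow_zero, pow_one, pow_one, sq, ← hA, ← hBdef]
  rw [hprod, hγ, hδ, hβt, hβ', hBi, hB]
  apply Polynomial.funext
  intro r
  simp only [eval_add, eval_mul, eval_sub, eval_pow, eval_X, eval_C, eval_one]
  have h1 : ζ * ζ⁻¹ = 1 := mul_inv_cancel₀ hzne
  have h2 : A * A⁻¹ = 1 := mul_inv_cancel₀ hAne
  have h3 : (3 : AlgebraicClosure (ZMod 3)) = 0 := by
    exact_mod_cast CharP.cast_eq_zero (AlgebraicClosure (ZMod 3)) 3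
  linear_combination (A ^ 2 * A⁻¹ ^ 2 + ζ * ζ⁻¹ * A ^ 2 * A⁻¹ ^ 2 - r * A * A⁻¹ ^ 2 - r * A ^ 2 * A⁻¹ - r * ζ⁻¹ * A ^ 2 * A⁻¹ - r * ζ⁻¹ * A ^ 2 * A⁻¹ ^ 2 - r * ζ * A * A⁻¹ ^ 2 - r * ζ * A ^ 2 * A⁻¹ ^ 2 - r * ζ * ζ⁻¹ * A * A⁻¹ ^ 2 - r * ζ * ζ⁻¹ * A ^ 2 * A⁻¹ + 2 * r ^ 2 * A * A⁻¹ + r ^ 2 * A * A⁻¹ ^ 2 + r ^ 2 * A ^ 2 * A⁻¹ + r ^ 2 * A ^ 2 * A⁻¹ ^ 2 + r ^ 2 * ζ⁻¹ * A * A⁻¹ + r ^ 2 * ζ⁻¹ * A * A⁻¹ ^ 2 + r ^ 2 * ζ⁻¹ * A ^ 2 + r ^ 2 * ζ⁻¹ * A ^ 2 * A⁻¹ + r ^ 2 * ζ * A⁻¹ ^ 2 + r ^ 2 * ζ * A * A⁻¹ + r ^ 2 * ζ * A * A⁻¹ ^ 2 + r ^ 2 * ζ * A ^ 2 * A⁻¹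 + r ^ 2 * ζ * ζ⁻¹ * A * A⁻¹ + 2 * r ^ 3 + r ^ 3 * A⁻¹ - r ^ 3 * A⁻¹ ^ 2 + r ^ 3 * A - r ^ 3 * A * A⁻¹ ^ 2 - r ^ 3 * A ^ 2 - r ^ 3 * A ^ 2 * A⁻¹ - r ^ 3 * ζ⁻¹ * A - r ^ 3 * ζ⁻¹ * A * A⁻¹ - r ^ 3 * ζ * A⁻¹ - r ^ 3 * ζ * A * A⁻¹ + r ^ 4 + r ^ 4 * A⁻¹ + r ^ 4 * A + r ^ 4 * A * A⁻¹) * h1 + (1 + A * A⁻¹ - r * A⁻¹ - r * A - r * ζ⁻¹ - r * ζ⁻¹ * A - r * ζ⁻¹ * A * A⁻¹ - r * ζ - r * ζ * A⁻¹ - r * ζ * A * A⁻¹ + 3 * r ^ 2 + r ^ 2 * A⁻¹ + r ^ 2 * A + r ^ 2 * A * A⁻¹ + r ^ 2 * ζ⁻¹ + r ^ 2 * ζ⁻¹ * A⁻¹ + r ^ 2 * ζ⁻¹ * A + r ^ 2 * ζ⁻¹ ^ 2 * A + r ^ 2 * ζ + r ^ 2 * ζ * A⁻¹ + r ^ 2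 * ζ * A + r ^ 2 * ζ ^ 2 * A⁻¹ + 2 * r ^ 3 - r ^ 3 * A⁻¹ - r ^ 3 * A - r ^ 3 * ζ⁻¹ * A - r ^ 3 * ζ⁻¹ ^ 2 - r ^ 3 * ζ * A⁻¹ - r ^ 3 * ζ ^ 2 + 2 * r ^ 4 + r ^ 4 * ζ⁻¹ + r ^ 4 * ζ) * h2 + (r ^ 2 + r ^ 3 + r ^ 3 * ζ⁻¹ * A⁻¹ + r ^ 3 * ζ⁻¹ * A ^ 2 + r ^ 3 * ζ⁻¹ ^ 2 * A + r ^ 3 * ζ * A⁻¹ ^ 2 + r ^ 3 * ζ * A + r ^ 3 * ζ ^ 2 * A⁻¹ + r ^ 4) * h3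
end

section
/- Let n = 2k+1 and q a prime power. If x = (x₁,...,x_n) over F̄_{q²} satisfies D·φ_{q²}(x) = x where D is the SU cross-section matrix (first row (-t₁^q,...,-t_k^q, (-1)^k, 0,...,0), subdiagonal 1's in the first k rows, middle column entries (-1)^k t_k,...,(-1)^k t₁,(-1)^k in rows k+1..n, superdiagonal 1's in rows k+1..n-1), then x₁ is a root of f(X) = X^{(q²)^n} + Σ_{i=1}^k t_i^{(q²)^{k+1-i}} X^{(q²)^{n-i}} − Σ_{i=1}^k t_i^q X^{(q²)^i} − X, and all other coordinates are determined polynomially by x₁. -/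
open Matrix

set_option maxHeartbeats 1000000 in
/-- Let `n = 2k+1` and `q = p^e` a prime power. If `x = (x₁,…,x_n)` over `F̄_{q²}`
(a field `L` of characteristic `p`) satisfies `D·φ_{q²}(x) = x`, where `D` is the SU
cross-section matrix (first row `(-t₁^q,…,-t_k^q, (-1)^k, 0,…,0)`, subdiagonal 1's in
rows 2..k, middle-column entries `(-1)^k t_k,…,(-1)^k t₁, (-1)^k` in rows k+1..n, and
superdiagonal 1's in rows k+1..n-1), then `x₁` is a root of
`f(X) = X^{(q²)^n} + Σ_{i=1}^k t_i^{(q²)^{k+1-i}} X^{(q²)^{n-i}} − Σ_{i=1}^k t_i^q X^{(q²)^i} − X`,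
and all other coordinates are determined (polynomially) by `x₁`. -/
theorem stmt_19 (p e q k n : ℕ) (hp : p.Prime) (hq : q = p ^ e) (he : 0 < e)
    (hk : 1 ≤ k) (hn : n = 2 * k + 1)
    {L : Type*} [Field L] [CharP L p] (t : ℕ → L)
    (D : Matrix (Fin n) (Fin n) L)
    (hD : ∀ i j : Fin n, D i j =
      if (i : ℕ) = 0 then
        (if (j : ℕ) < k then -(t ((j : ℕ) + 1)) ^ q
         else if (j : ℕ) = k then (-1 : L) ^ k else 0)
      else if (i : ℕ) < k then (if (j : ℕ) + 1 = (i : ℕ) then 1 else 0)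
      else if (i : ℕ) < 2 * k then
        (if (j : ℕ) = k - 1 then (-1 : L) ^ k * t (2 * k - (i : ℕ))
         else if (j : ℕ) = (i : ℕ) + 1 then 1 else 0)
      else (if (j : ℕ) = k - 1 then (-1 : L) ^ k else 0))
    (f : L → L)
    (hf : ∀ X : L, f X =
      X ^ (q ^ 2) ^ n
        + (∑ i ∈ Finset.Icc 1 k, (t i) ^ (q ^ 2) ^ (k + 1 - i) * X ^ (q ^ 2) ^ (n - i))
        - (∑ i ∈ Finset.Icc 1 k, (t i) ^ q * X ^ (q ^ 2) ^ i)
        - X)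
    (x : Fin n → L)
    (hx : D.mulVec (fun i => x i ^ q ^ 2) = x) :
    f (x ⟨0, by omega⟩) = 0 ∧
    (∀ y : Fin n → L, D.mulVec (fun i => y i ^ q ^ 2) = y →
      y ⟨0, by omega⟩ = x ⟨0, by omega⟩ → y = x) := by
  haveI : Fact p.Prime := ⟨hp⟩
  haveI : ExpChar L p := ExpChar.prime hp
  have hQp : q ^ 2 = p ^ (2 * e) := by rw [hq, ← pow_mul, mul_comm]
  set Q := q ^ 2 with hQdef
  set F := iterateFrobenius L p (2 * e) with hFdef
  have hF : ∀ z : L, F z = z ^ Q := by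
    intro z; rw [hFdef, iterateFrobenius_def, ← hQp]
  have hnegQ : ((-1 : L) ^ k) ^ Q = (-1 : L) ^ k := by
    rw [← hF, map_pow, map_neg, _root_.map_one]
  have pow_step : ∀ (z : L) (m : ℕ), (z ^ Q ^ m) ^ Q = z ^ Q ^ (m + 1) := by
    intro z m; rw [← pow_mul, ← pow_succ]
  have hrow : ∀ y : Fin n → L, D.mulVec (fun i => y i ^ Q) = y →
      ∀ i : Fin n, (∑ j : Fin n, D i j * y j ^ Q) = y i := by
    intro y hy i
    conv_rhs => rw [← hy]
    simp [Matrix.mulVec, dotProduct]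
  have key : ∀ y : Fin n → L, D.mulVec (fun i => y i ^ Q) = y →
      (∀ i : ℕ, (hi : i < k) → y ⟨i, by omega⟩ = (y ⟨0, by omega⟩) ^ Q ^ i) ∧
      (∀ j : ℕ, (hj : j ≤ k) → y ⟨2 * k - j, by omega⟩ =
        (-1 : L) ^ k *
          ((∑ m ∈ Finset.Icc 1 j, t m ^ Q ^ (j - m) * (y ⟨0, by omega⟩) ^ Q ^ (k + j - m))
            + (y ⟨0, by omega⟩) ^ Q ^ (k + j))) := by
    intro y hy
    have hr := hrow y hy
    have part1 : ∀ i : ℕ, (hi : i < k) → y ⟨i, by omega⟩ = (y ⟨0, by omega⟩) ^ Q ^ i := by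
      intro i
      induction i with
      | zero => intro _; simp
      | succ i ih =>
        intro hi
        have h0 := hr ⟨i + 1, by omega⟩
        have hsum : (∑ j : Fin n, D ⟨i + 1, by omega⟩ j * y j ^ Q)
            = y ⟨i, by omega⟩ ^ Q := by
          rw [Finset.sum_eq_single (⟨i, by omega⟩ : Fin n)]
          · rw [hD, if_neg (show ¬(i + 1 = 0) by omega), if_pos (show i + 1 < k from hi),
              if_pos (show i + 1 = i + 1 from rfl), one_mul]
          · intro b _ hb
            have hb' : (b : ℕ) ≠ i := fun h => hb (Fin.ext h)
            rw [hD, if_neg (show ¬(i + 1 = 0) by omega), if_pos (show i + 1 < k from hi),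
              if_neg (show ¬((b : ℕ) + 1 = i + 1) by omega), zero_mul]
          · intro h; exact absurd (Finset.mem_univ _) h
        rw [← h0, hsum, ih (by omega), pow_step]
    refine ⟨part1, ?_⟩
    intro j
    induction j with
    | zero =>
      intro _
      have h0 := hr ⟨2 * k, by omega⟩
      have hsum : (∑ j : Fin n, D ⟨2 * k, by omega⟩ j * y j ^ Q)
          = (-1 : L) ^ k * y ⟨k - 1, by omega⟩ ^ Q := by
        rw [Finset.sum_eq_single (⟨k - 1, by omega⟩ : Fin n)]
        · rw [hD, if_neg (show ¬(2 * k = 0) by omega), if_neg (show ¬(2 * k < k) by omega),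
            if_neg (show ¬(2 * k < 2 * k) by omega), if_pos (show k - 1 = k - 1 from rfl)]
        · intro b _ hb
          have hb' : (b : ℕ) ≠ k - 1 := fun h => hb (Fin.ext h)
          rw [hD, if_neg (show ¬(2 * k = 0) by omega), if_neg (show ¬(2 * k < k) by omega),
            if_neg (show ¬(2 * k < 2 * k) by omega), if_neg hb', zero_mul]
        · intro h; exact absurd (Finset.mem_univ _) h
      have hidx : (⟨2 * k - 0, by omega⟩ : Fin n) = (⟨2 * k, by omega⟩ : Fin n) :=
        Fin.ext (show 2 * k - 0 = 2 * k by omega)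
      rw [hidx, ← h0, hsum, part1 (k - 1) (by omega), pow_step]
      rw [show Q ^ (k - 1 + 1) = Q ^ k from by rw [show k - 1 + 1 = k from by omega]]
      rw [show Finset.Icc 1 0 = (∅ : Finset ℕ) from rfl, Finset.sum_empty, zero_add,
        show Q ^ (k + 0) = Q ^ k from by rw [Nat.add_zero]]
    | succ j ihj =>
      intro hj
      have h0 := hr ⟨2 * k - (j + 1), by omega⟩
      have hsum : (∑ m : Fin n, D ⟨2 * k - (j + 1), by omega⟩ m * y m ^ Q)
          = (-1 : L) ^ k * t (j + 1) * y ⟨k - 1, by omega⟩ ^ Q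
            + y ⟨2 * k - j, by omega⟩ ^ Q := by
        have expand : ∀ m : Fin n, D ⟨2 * k - (j + 1), by omega⟩ m * y m ^ Q =
            (if m = (⟨k - 1, by omega⟩ : Fin n) then ((-1 : L) ^ k * t (j + 1)) * y m ^ Q else 0)
            + (if m = (⟨2 * k - j, by omega⟩ : Fin n) then y m ^ Q else 0) := by
          intro m
          rw [hD, if_neg (show ¬(2 * k - (j + 1) = 0) by omega),
            if_neg (show ¬(2 * k - (j + 1) < k) by omega),
            if_pos (show 2 * k - (j + 1) < 2 * k by omega)]
          by_cases h1 : m = (⟨k - 1, by omega⟩ : Fin n)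
          · rw [h1, if_pos (show k - 1 = k - 1 from rfl), if_pos rfl,
              if_neg (show ¬((⟨k - 1, by omega⟩ : Fin n) = (⟨2 * k - j, by omega⟩ : Fin n)) from
                fun h => by rw [Fin.ext_iff] at h; simp only [] at h; omega),
              add_zero, show 2 * k - (2 * k - (j + 1)) = j + 1 from by omega]
          · have h1' : (m : ℕ) ≠ k - 1 := fun h => h1 (Fin.ext h)
            rw [if_neg h1', if_neg h1, zero_add]
            by_cases h2 : m = (⟨2 * k - j, by omega⟩ : Fin n)
            · rw [h2, if_pos (show 2 * k - j = 2 * k - (j + 1) + 1 by omega), if_pos rfl, one_mul]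
            · have h2' : (m : ℕ) ≠ 2 * k - j := fun h => h2 (Fin.ext h)
              rw [if_neg (show ¬((m : ℕ) = 2 * k - (j + 1) + 1) by omega), if_neg h2, zero_mul]
        rw [Finset.sum_congr rfl (fun m _ => expand m), Finset.sum_add_distrib,
          Finset.sum_ite_eq' Finset.univ, Finset.sum_ite_eq' Finset.univ,
          if_pos (Finset.mem_univ _), if_pos (Finset.mem_univ _)]
      rw [← h0, hsum, part1 (k - 1) (by omega), pow_step, ihj (by omega), mul_pow, hnegQ]
      rw [show Q ^ (k - 1 + 1) = Q ^ k from by rw [show k - 1 + 1 = k from by omega]]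
      rw [← hF ((∑ m ∈ Finset.Icc 1 j, t m ^ Q ^ (j - m) * (y ⟨0, by omega⟩) ^ Q ^ (k + j - m))
          + (y ⟨0, by omega⟩) ^ Q ^ (k + j)), map_add, _root_.map_sum, hF ((y ⟨0, by omega⟩) ^ Q ^ (k + j))]
      rw [Finset.sum_Icc_succ_top (show 1 ≤ j + 1 by omega)]
      have hterm : ∀ m ∈ Finset.Icc 1 j,
          F (t m ^ Q ^ (j - m) * (y ⟨0, by omega⟩) ^ Q ^ (k + j - m))
            = t m ^ Q ^ (j + 1 - m) * (y ⟨0, by omega⟩) ^ Q ^ (k + (j + 1) - m) := by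
        intro m hm
        rw [Finset.mem_Icc] at hm
        rw [_root_.map_mul, hF, hF, pow_step, pow_step,
          show j - m + 1 = j + 1 - m from by omega,
          show k + j - m + 1 = k + (j + 1) - m from by omega]
      rw [Finset.sum_congr rfl hterm, pow_step,
        show j + 1 - (j + 1) = 0 from by omega,
        show k + (j + 1) - (j + 1) = k from by omega,
        show k + j + 1 = k + (j + 1) from by omega]
      ring
  obtain ⟨px1, px2⟩ := key x hx
  set a := x ⟨0, by omega⟩ with ha
  constructor
  · -- f a = 0
    have h0 := hrow x hx ⟨0, by omega⟩
    have hxk := px2 k le_rfl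
    rw [show (⟨2 * k - k, by omega⟩ : Fin n) = (⟨k, by omega⟩ : Fin n) from Fin.ext (show 2 * k - k = k by omega)]
      at hxk
    have hxkQ : x ⟨k, by omega⟩ ^ Q
        = (-1 : L) ^ k *
          ((∑ m ∈ Finset.Icc 1 k, t m ^ Q ^ (k + 1 - m) * a ^ Q ^ (n - m)) + a ^ Q ^ n) := by
      rw [hxk, mul_pow, hnegQ,
        ← hF ((∑ m ∈ Finset.Icc 1 k, t m ^ Q ^ (k - m) * a ^ Q ^ (k + k - m)) + a ^ Q ^ (k + k)),
        map_add, _root_.map_sum, hF (a ^ Q ^ (k + k)), pow_step,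
        show k + k + 1 = n from by omega]
      congr 2
      refine Finset.sum_congr rfl ?_
      intro m hm
      rw [Finset.mem_Icc] at hm
      rw [_root_.map_mul, hF, hF, pow_step, pow_step,
        show k - m + 1 = k + 1 - m from by omega,
        show k + k - m + 1 = n - m from by omega]
    have hsum0 : (∑ j : Fin n, D ⟨0, by omega⟩ j * x j ^ Q)
        = -(∑ i ∈ Finset.Icc 1 k, t i ^ q * a ^ Q ^ i)
          + (-1 : L) ^ k * x ⟨k, by omega⟩ ^ Q := by
      have expand : ∀ m : Fin n, D ⟨0, by omega⟩ m * x m ^ Q =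
          (if (m : ℕ) < k then -(t ((m : ℕ) + 1)) ^ q * a ^ Q ^ ((m : ℕ) + 1) else 0)
          + (if m = (⟨k, by omega⟩ : Fin n) then ((-1 : L) ^ k) * x m ^ Q else 0) := by
        intro m
        rw [hD, if_pos (show (0 : ℕ) = 0 from rfl)]
        by_cases h1 : (m : ℕ) < k
        · rw [if_pos h1, if_pos h1,
            if_neg (show ¬(m = (⟨k, by omega⟩ : Fin n)) from
              fun h => by
                have hval : (m : ℕ) = k := by rw [h]
                omega),
            add_zero]
          have hxm : x m = a ^ Q ^ (m : ℕ) := by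
            have h2 := px1 (m : ℕ) h1
            rwa [Fin.eta m (by omega)] at h2
          rw [hxm, pow_step]
        · rw [if_neg h1, if_neg h1, zero_add]
          by_cases h2 : m = (⟨k, by omega⟩ : Fin n)
          · rw [h2, if_pos (show k = k from rfl), if_pos rfl]
          · have h2' : (m : ℕ) ≠ k := fun h => h2 (Fin.ext h)
            rw [if_neg h2', if_neg h2, zero_mul]
      rw [Finset.sum_congr rfl (fun m _ => expand m), Finset.sum_add_distrib,
        Finset.sum_ite_eq' Finset.univ, if_pos (Finset.mem_univ _)]
      congr 1
      rw [Fin.sum_univ_eq_sum_range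
        (fun m => if m < k then -(t (m + 1)) ^ q * a ^ Q ^ (m + 1) else 0) n]
      rw [← Finset.sum_filter, show (Finset.range n).filter (· < k) = Finset.range k from by
        ext m; simp only [Finset.mem_filter, Finset.mem_range]; omega]
      rw [show Finset.Icc 1 k = Finset.Ico 1 (k + 1) from rfl, Finset.sum_Ico_eq_sum_range,
        show k + 1 - 1 = k from by omega, ← Finset.sum_neg_distrib]
      refine Finset.sum_congr rfl ?_
      intro m hm
      rw [show 1 + m = m + 1 from by omega]
      ring
    have hmain : a = -(∑ i ∈ Finset.Icc 1 k, t i ^ q * a ^ Q ^ i)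
        + ((∑ m ∈ Finset.Icc 1 k, t m ^ Q ^ (k + 1 - m) * a ^ Q ^ (n - m)) + a ^ Q ^ n) := by
      have h0' := h0
      rw [hsum0, hxkQ, ← mul_assoc, ← pow_add, ← two_mul, pow_mul, neg_one_sq, one_pow,
        one_mul] at h0'
      exact h0'.symm
    rw [hf]
    linear_combination -hmain
  · intro y hy hy0
    obtain ⟨py1, py2⟩ := key y hy
    funext i
    rcases lt_or_ge (i : ℕ) k with h | h
    · have h1 := py1 (i : ℕ) h
      have h2 := px1 (i : ℕ) h
      rw [Fin.eta i (by omega)] at h1 h2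
      rw [h1, h2, hy0]
    · have hi2 : (i : ℕ) < n := i.isLt
      have h1 := py2 (2 * k - (i : ℕ)) (by omega)
      have h2 := px2 (2 * k - (i : ℕ)) (by omega)
      rw [show (⟨2 * k - (2 * k - (i : ℕ)), by omega⟩ : Fin n) = i from Fin.ext
        (show 2 * k - (2 * k - (i : ℕ)) = (i : ℕ) by omega)] at h1 h2
      rw [h1, h2, hy0]
end
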